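/- arXiv:1605.07765 — 4 statements merged into one kernel-verified Lean document; each statement's English description precedes it below -/
import Mathlib

section
/- Let q be a prime power and f ∈ 𝔽_q[t][x] a square-free polynomial of positive degree k in x. If for a prime (monic irreducible) P ∈ 𝔽_q[t], P does not divide the resultant Res_x(f, ∂f/∂x)·Res_x(f, ∂f/∂t), then the number of residues a mod P² with f(a) ≡ 0 (mod P²) is at most the number of residues a mod P with f(a) ≡ 0 (mod P). -/
open Polynomial

/-!
Reduction modulo `P` maps the roots of `f` modulo `P²` to roots modulo `P`. It is injective:
since `Res_x(f, ∂f/∂x)` is a combination `u f + v ∂f/∂x`, the hypothesis on `P` makes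
`∂f/∂x (b)` nonzero modulo `P` at every root `b` modulo `P`, and the Taylor expansion
`f(b + P c) ≡ f(b) + ∂f/∂x (b) P c (mod P²)` then shows that `b` lifts to at most one root
modulo `P²`.
-/

/-- The Sylvester matrix of two polynomials `f, g` over a commutative ring. -/
noncomputable def sylvesterMatrix {R : Type*} [CommRing R] (f g : R[X]) :
    Matrix (Fin (g.natDegree + f.natDegree)) (Fin (g.natDegree + f.natDegree)) R :=
  fun i j =>
    match finSumFinEquiv.symm i with
    | Sum.inl i' => if (i' : ℕ) ≤ (j : ℕ) then f.coeff ((j : ℕ) - (i' : ℕ)) else 0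
    | Sum.inr i' => if (i' : ℕ) ≤ (j : ℕ) then g.coeff ((j : ℕ) - (i' : ℕ)) else 0

/-- The resultant of two polynomials, as the determinant of their Sylvester matrix. -/
noncomputable def resultant {R : Type*} [CommRing R] (f g : R[X]) : R :=
  (sylvesterMatrix f g).det

/-- Coefficient-wise derivative in `t` of an element of `𝔽_q[t][x]`. -/
noncomputable def tderiv {Fq : Type*} [Field Fq] (f : Polynomial (Polynomial Fq)) :
    Polynomial (Polynomial Fq) :=
  f.sum fun n c => Polynomial.C (Polynomial.derivative c) * Polynomial.X ^ n

section

variable {R : Type*} [CommRing R]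

theorem ite_coeff_sub_eq_ite_mem_Icc (p : R[X]) (i j : ℕ) :
    (if i ≤ j then p.coeff (j - i) else 0) =
      if j ∈ Set.Icc i (i + p.natDegree) then p.coeff (j - i) else 0 := by
  by_cases hij : i ≤ j
  · by_cases hj : j ≤ i + p.natDegree
    · simp [hij, hj]
    · simp [hij, hj, coeff_eq_zero_of_natDegree_lt (show p.natDegree < j - i by omega)]
  · simp [hij]

theorem sylvesterMatrix_eq_transpose_sylvester (f g : R[X]) :
    sylvesterMatrix f g = (sylvester g f g.natDegree f.natDegree).transpose := by
  ext i j
  refine Fin.addCases (fun i => ?_) (fun i => ?_) i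
  · simp only [sylvesterMatrix, finSumFinEquiv_symm_apply_castAdd, Matrix.transpose_apply,
      sylvester, Matrix.of_apply, Fin.addCases_left]
    exact ite_coeff_sub_eq_ite_mem_Icc f i j
  · simp only [sylvesterMatrix, finSumFinEquiv_symm_apply_natAdd, Matrix.transpose_apply,
      sylvester, Matrix.of_apply, Fin.addCases_right]
    exact ite_coeff_sub_eq_ite_mem_Icc g i j

theorem resultant_eq_resultant_swap (f g : R[X]) :
    _root_.resultant f g = Polynomial.resultant g f := by
  rw [_root_.resultant, sylvesterMatrix_eq_transpose_sylvester, Matrix.det_transpose,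
    Polynomial.resultant]

theorem dvd_resultant_of_dvd_eval {f g : R[X]} (hfg : f.natDegree ≠ 0 ∨ g.natDegree ≠ 0)
    {r a : R} (hf : r ∣ f.eval a) (hg : r ∣ g.eval a) : r ∣ _root_.resultant f g := by
  obtain ⟨p, q, -, -, hpq⟩ :=
    exists_mul_add_mul_eq_C_resultant g f le_rfl le_rfl hfg.symm
  rw [resultant_eq_resultant_swap, ← eval_C (a := g.resultant f) (x := a), ← hpq, eval_add,
    eval_mul, eval_mul]
  exact dvd_add (hg.mul_right _) (hf.mul_right _)

theorem sq_dvd_sub_of_sq_dvd_eval [IsDomain R] {p : R} (hp : Prime p) (f : R[X]) {a b : R}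
    (hab : p ∣ a - b) (ha : p ^ 2 ∣ f.eval a) (hb : p ^ 2 ∣ f.eval b)
    (hf' : ¬ p ∣ (derivative f).eval b) : p ^ 2 ∣ a - b := by
  obtain ⟨c, hc⟩ := hab
  obtain ⟨k, hk⟩ := f.binomExpansion b (p * c)
  have hlin : p * p ∣ (derivative f).eval b * c * p := by
    have hsplit : (derivative f).eval b * c * p = f.eval a - f.eval b - k * (p * c) ^ 2 := by
      rw [show a = b + p * c by rw [← hc]; ring, hk]; ring
    rw [← sq, hsplit]
    exact dvd_sub (dvd_sub ha hb) (Dvd.intro (k * c ^ 2) (by ring))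
  have hpc : p ∣ c :=
    (hp.dvd_mul.mp ((mul_dvd_mul_iff_right hp.ne_zero).mp hlin)).resolve_left hf'
  rw [hc, sq]
  exact mul_dvd_mul_left p hpc

/-- Roots of `F` modulo `D`, represented by remainders of degree `< deg D`;
`ρ(D)` is the cardinality of this set. -/
def rootsMod (F : R[X][X]) (D : R[X]) : Set R[X] :=
  {a | a.degree < D.degree ∧ D ∣ F.eval a}

variable {F : R[X][X]} {P : R[X]}

theorem rootsMod_finite [Finite R] (D : R[X]) : (rootsMod F D).Finite := by
  have : Finite (degreeLT R D.natDegree) := .of_equiv _ (degreeLTEquiv R D.natDegree).symm.toEquiv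
  refine (degreeLT R D.natDegree : Set R[X]).toFinite.subset fun a ha => ?_
  exact mem_degreeLT.mpr (ha.1.trans_le degree_le_natDegree)

theorem mapsTo_modByMonic_rootsMod_sq [Nontrivial R] (hP : P.Monic) :
    Set.MapsTo (· %ₘ P) (rootsMod F (P ^ 2)) (rootsMod F P) := by
  rintro a ⟨-, ha⟩
  refine ⟨degree_modByMonic_lt a hP, ?_⟩
  have hdiff : P ∣ F.eval (a %ₘ P) - F.eval a :=
    (dvd_modByMonic_sub a P).trans (sub_dvd_eval_sub _ _ F)
  simpa using dvd_add hdiff ((dvd_pow_self P two_ne_zero).trans ha)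

theorem injOn_modByMonic_rootsMod_sq [IsDomain R] (hP : P.Monic) (hPp : Prime P)
    (hsimple : ∀ b, P ∣ F.eval b → ¬ P ∣ (derivative F).eval b) :
    Set.InjOn (· %ₘ P) (rootsMod F (P ^ 2)) := by
  rintro a ⟨hadeg, ha⟩ b ⟨hbdeg, hb⟩ hab
  have hPab : P ∣ a - b := by
    rw [← modByMonic_eq_zero_iff_dvd hP, sub_modByMonic, sub_eq_zero]
    exact hab
  have hP2ab : P ^ 2 ∣ a - b :=
    sq_dvd_sub_of_sq_dvd_eval hPp F hPab ha hb (hsimple b ((dvd_pow_self P two_ne_zero).trans hb))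
  refine sub_eq_zero.mp (eq_zero_of_dvd_of_degree_lt hP2ab ?_)
  exact (degree_sub_le a b).trans_lt (max_lt hadeg hbdeg)

theorem ncard_rootsMod_sq_le [IsDomain R] [Finite R] (hP : P.Monic) (hPp : Prime P)
    (hsimple : ∀ b, P ∣ F.eval b → ¬ P ∣ (derivative F).eval b) :
    (rootsMod F (P ^ 2)).ncard ≤ (rootsMod F P).ncard :=
  Set.ncard_le_ncard_of_injOn _ (mapsTo_modByMonic_rootsMod_sq hP)
    (injOn_modByMonic_rootsMod_sq hP hPp hsimple) (rootsMod_finite P)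

end

theorem rho_sq_le_rho_of_not_dvd_resultant_general (Fq : Type*) [Field Fq] [Fintype Fq]
    (f : Polynomial (Polynomial Fq)) (k : ℕ) (hk : f.natDegree = k)
    (hkpos : 0 < k)
    (P : Polynomial Fq) (hP : Irreducible P) (hPm : P.Monic)
    (hres : ¬ P ∣ _root_.resultant f (derivative f) * _root_.resultant f (tderiv f)) :
    {a : Polynomial Fq | a.degree < (P ^ 2).degree ∧ P ^ 2 ∣ f.eval a}.ncard ≤
      {a : Polynomial Fq | a.degree < P.degree ∧ P ∣ f.eval a}.ncard := by
  refine ncard_rootsMod_sq_le hPm hP.prime fun b hb hb' => hres ?_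
  exact (dvd_resultant_of_dvd_eval (.inl (by omega)) hb hb').mul_right _

/-- For a square-free `f ∈ 𝔽_q[t][x]` of positive degree in `x` and a monic irreducible
`P ∈ 𝔽_q[t]` not dividing `Res_x(f, ∂f/∂x) · Res_x(f, ∂f/∂t)`, the number of residues
`a mod P²` with `f(a) ≡ 0 (mod P²)` is at most the number of residues `a mod P` with
`f(a) ≡ 0 (mod P)`, i.e. `ρ(P²) ≤ ρ(P)`. -/
theorem rho_sq_le_rho_of_not_dvd_resultant (Fq : Type*) [Field Fq] [Fintype Fq]
    (f : Polynomial (Polynomial Fq)) (hf : Squarefree f) (k : ℕ) (hk : f.natDegree = k)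
    (hkpos : 0 < k)
    (P : Polynomial Fq) (hP : Irreducible P) (hPm : P.Monic)
    (hres : ¬ P ∣ _root_.resultant f (derivative f) * _root_.resultant f (tderiv f)) :
    {a : Polynomial Fq | a.degree < (P ^ 2).degree ∧ P ^ 2 ∣ f.eval a}.ncard ≤
      {a : Polynomial Fq | a.degree < P.degree ∧ P ∣ f.eval a}.ncard :=
  rho_sq_le_rho_of_not_dvd_resultant_general Fq f k hk hkpos P hP hPm hres
end

section
/- Let q be a prime power, k ≥ 1, and f ∈ 𝔽_q[t][x] a square-free polynomial with deg_x f ≤ k. For any prime P ∈ 𝔽_q[t] dividing the content of f (the gcd of the 𝔽_q[t]-coefficients of f), the number of residues a mod P² with f(a) ≡ 0 (mod P²) is at most k·q^{deg P}. -/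
open Polynomial

noncomputable instance (Fq : Type*) [Field Fq] : NormalizedGCDMonoid (Polynomial Fq) := by
  classical exact UniqueFactorizationMonoid.toNormalizedGCDMonoid _

/-!
Write `f = C P * g`. As `f` is squarefree, `C P ∤ g`, so the reduction `ḡ` of `g` modulo `P` is a
nonzero polynomial of degree `≤ k` over the field `𝔽_q[t]/(P)`, with at most `k` roots. Now
`P² ∣ f(a)` iff `P ∣ g(a)` iff `a mod P` is a root of `ḡ`, and `a` with `deg a < 2 deg P` is
determined by `a mod P` together with `a /ₘ P`, a polynomial of degree `< deg P`.
-/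

namespace Polynomial

section CommRing

variable {R : Type*} [CommRing R] {P : R[X]}

theorem ncard_degreeLT [Fintype R] (n : ℕ) :
    (degreeLT R n : Set R[X]).ncard = Fintype.card R ^ n := by
  rw [← Nat.card_coe_set_eq, SetLike.coe_sort_coe,
    Nat.card_congr (degreeLTEquiv R n).toEquiv, Nat.card_eq_fintype_card, Fintype.card_fun,
    Fintype.card_fin]

theorem divByMonic_mem_degreeLT_of_degree_lt_sq (hP : P.Monic) {a : R[X]}
    (ha : a.degree < (P ^ 2).degree) : a /ₘ P ∈ degreeLT R P.natDegree := by
  nontriviality R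
  rw [mem_degreeLT]
  by_cases h0 : a /ₘ P = 0
  · rw [h0, degree_zero]
    exact WithBot.bot_lt_coe _
  have ha0 : a ≠ 0 := by rintro rfl; simp at h0
  have hlt : a.natDegree < 2 * P.natDegree := by
    rw [← hP.natDegree_pow]
    exact natDegree_lt_natDegree ha0 ha
  rw [degree_eq_natDegree h0, natDegree_divByMonic a hP, Nat.cast_lt]
  omega

theorem injective_mk_prod_divByMonic (hP : P.Monic) :
    Function.Injective fun a : R[X] => (AdjoinRoot.mk P a, a /ₘ P) := by
  intro a b hab
  simp only [Prod.mk.injEq] at hab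
  rw [← modByMonic_add_div a P, ← modByMonic_add_div b P, ← AdjoinRoot.modByMonicHom_mk hP,
    ← AdjoinRoot.modByMonicHom_mk hP b, hab.1, hab.2]

theorem ncard_degree_lt_sq_mk_mem_le [Fintype R] (hP : P.Monic) (Z : Finset (AdjoinRoot P)) :
    {a : R[X] | a.degree < (P ^ 2).degree ∧ AdjoinRoot.mk P a ∈ Z}.ncard ≤
      Z.card * Fintype.card R ^ P.natDegree := by
  have hfin : ((Z : Set (AdjoinRoot P)) ×ˢ (degreeLT R P.natDegree : Set R[X])).Finite :=
    Z.finite_toSet.prod (Finite.of_equiv _ (degreeLTEquiv R _).toEquiv.symm)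
  calc _ ≤ ((Z : Set (AdjoinRoot P)) ×ˢ (degreeLT R P.natDegree : Set R[X])).ncard :=
        Set.ncard_le_ncard_of_injOn _
          (fun a ha => ⟨ha.2, divByMonic_mem_degreeLT_of_degree_lt_sq hP ha.1⟩)
          (injective_mk_prod_divByMonic hP).injOn hfin
    _ = _ := by rw [Set.ncard_prod, Set.ncard_coe_finset, ncard_degreeLT]

theorem map_adjoinRootMk_eq_zero_iff {g : R[X][X]} : g.map (AdjoinRoot.mk P) = 0 ↔ C P ∣ g := by
  simp [Polynomial.ext_iff, C_dvd_iff_dvd_coeff, AdjoinRoot.mk_eq_zero]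

theorem isRoot_map_adjoinRootMk_iff {g : R[X][X]} {a : R[X]} :
    (g.map (AdjoinRoot.mk P)).IsRoot (AdjoinRoot.mk P a) ↔ P ∣ g.eval a := by
  rw [IsRoot, eval_map, eval₂_hom, AdjoinRoot.mk_eq_zero]

theorem sq_dvd_eval_C_mul_iff [IsDomain R] (hP : P ≠ 0) {g : R[X][X]} {a : R[X]} :
    P ^ 2 ∣ (C P * g).eval a ↔ P ∣ g.eval a := by
  rw [eval_mul, eval_C, sq, mul_dvd_mul_iff_left hP]

end CommRing

end Polynomial

theorem rho_le_of_dvd_content_general (Fq : Type*) [Field Fq] [Fintype Fq] (k : ℕ)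
    (f : Polynomial (Polynomial Fq)) (hf : Squarefree f) (hdeg : f.natDegree ≤ k)
    (P : Polynomial Fq) (hP : Irreducible P) (hPm : P.Monic) (hPc : P ∣ f.content) :
    {a : Polynomial Fq | a.degree < (P ^ 2).degree ∧ P ^ 2 ∣ f.eval a}.ncard ≤
      k * Fintype.card Fq ^ P.natDegree := by
  obtain ⟨g, rfl⟩ : C P ∣ f := dvd_content_iff_C_dvd.mp hPc
  have : Fact (Irreducible P) := ⟨hP⟩
  set gbar := g.map (AdjoinRoot.mk P)
  have hgbar : gbar ≠ 0 := fun h => hP.not_isUnit <| isUnit_C.mp <|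
    hf _ <| mul_dvd_mul_left _ <| map_adjoinRootMk_eq_zero_iff.mp h
  have hroots : gbar.roots.toFinset.card ≤ k :=
    calc gbar.roots.toFinset.card ≤ gbar.natDegree :=
          (Multiset.toFinset_card_le _).trans (card_roots' _)
      _ ≤ g.natDegree := natDegree_map_le
      _ ≤ (C P * g).natDegree := natDegree_le_of_dvd (dvd_mul_left g _) hf.ne_zero
      _ ≤ k := hdeg
  have hset : {a : Fq[X] | a.degree < (P ^ 2).degree ∧ P ^ 2 ∣ (C P * g).eval a} =
      {a | a.degree < (P ^ 2).degree ∧ AdjoinRoot.mk P a ∈ gbar.roots.toFinset} := by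
    ext a
    rw [Set.mem_ofPred_eq, Set.mem_ofPred_eq, Multiset.mem_toFinset, mem_roots hgbar,
      isRoot_map_adjoinRootMk_iff, sq_dvd_eval_C_mul_iff hP.ne_zero]
  rw [hset]
  exact (ncard_degree_lt_sq_mk_mem_le hPm _).trans (Nat.mul_le_mul_right _ hroots)

/-- For `f ∈ 𝔽_q[t][x]` square-free with `deg_x f ≤ k`, and a monic irreducible
`P ∈ 𝔽_q[t]` dividing the content of `f`, the number of residues `a mod P²` with
`f(a) ≡ 0 (mod P²)` is at most `k·q^{deg P}`. -/
theorem rho_le_of_dvd_content (Fq : Type*) [Field Fq] [Fintype Fq] (k : ℕ) (hk : 1 ≤ k)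
    (f : Polynomial (Polynomial Fq)) (hf : Squarefree f) (hdeg : f.natDegree ≤ k)
    (P : Polynomial Fq) (hP : Irreducible P) (hPm : P.Monic) (hPc : P ∣ f.content) :
    {a : Polynomial Fq | a.degree < (P ^ 2).degree ∧ P ^ 2 ∣ f.eval a}.ncard ≤
      k * Fintype.card Fq ^ P.natDegree :=
  rho_le_of_dvd_content_general Fq k f hf hdeg P hP hPm hPc
end

section
/- Let p be a prime, q a power of p, and f ∈ 𝔽_q[t][x]. Define F(y₀,...,y_{p-1}) = f(y₀^p + t·y₁^p + ... + t^{p-1}·y_{p-1}^p). Then for any y = (y₀,...,y_{p-1}) ∈ 𝔽_q[t]^p and any monic irreducible P ∈ 𝔽_q[t], P² divides F(y) if and only if P divides both F(y) and (∂F/∂t)(y). -/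
open Polynomial MvPolynomial

/-- Coefficient-wise `t`-derivative of a multivariate polynomial over `𝔽_q[t]`. -/
noncomputable def tderivMv {Fq : Type*} [Field Fq] {σ : Type*}
    (F : MvPolynomial σ (Polynomial Fq)) : MvPolynomial σ (Polynomial Fq) :=
  ∑ d ∈ F.support, MvPolynomial.monomial d (Polynomial.derivative (F.coeff d))

/-- The subalgebra of mv polynomials all of whose exponents are divisible by `p`. -/
def goodSub (p : ℕ) (Fq : Type*) [Field Fq] (σ : Type*) [DecidableEq σ] :
    Subalgebra (Polynomial Fq) (MvPolynomial σ (Polynomial Fq)) where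
  carrier := {F | ∀ d ∈ F.support, ∀ i, p ∣ d i}
  mul_mem' := by
    intro a b ha hb d hd i
    obtain ⟨d1, h1, d2, h2, rfl⟩ := Finset.mem_add.mp (MvPolynomial.support_mul a b hd)
    simpa using (ha d1 h1 i).add (hb d2 h2 i)
  add_mem' := by
    intro a b ha hb d hd i
    rcases Finset.mem_union.mp (MvPolynomial.support_add hd) with h | h
    · exact ha d h i
    · exact hb d h i
  algebraMap_mem' := by
    intro r d hd i
    classical
    simp only [MvPolynomial.algebraMap_eq, MvPolynomial.mem_support_iff,
      MvPolynomial.coeff_C, ne_eq, ite_eq_right_iff, not_forall] at hd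
    obtain ⟨rfl, -⟩ := hd
    simp

/-- For an irreducible `P` over a perfect (e.g. finite) field, `P² ∣ g ↔ P ∣ g ∧ P ∣ g'`. -/
theorem sq_dvd_aux {Fq : Type*} [Field Fq] [Finite Fq] {P g : Polynomial Fq}
    (hP : Irreducible P) :
    P ^ 2 ∣ g ↔ P ∣ g ∧ P ∣ Polynomial.derivative g := by
  constructor
  · rintro ⟨h, rfl⟩
    refine ⟨dvd_mul_of_dvd_left (dvd_pow_self P two_ne_zero) _, ?_⟩
    rw [Polynomial.derivative_mul, Polynomial.derivative_pow]
    exact dvd_add ⟨Polynomial.C 2 * Polynomial.derivative P * h, by push_cast; ring⟩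
      (dvd_mul_of_dvd_left (dvd_pow_self P two_ne_zero) _)
  · rintro ⟨⟨k, rfl⟩, hd⟩
    rw [Polynomial.derivative_mul,
      dvd_add_left (dvd_mul_right P (Polynomial.derivative k))] at hd
    obtain ⟨m, rfl⟩ := (PerfectField.separable_of_irreducible hP).dvd_of_dvd_mul_left hd
    exact ⟨m, by ring⟩

/-- If every exponent occurring in `F` is divisible by `p = char`, then the `t`-derivative of
`F(y(t))` equals `(∂F/∂t)(y)`. -/
lemma eval_tderiv {p : ℕ} {Fq : Type*} [Field Fq] [CharP Fq p]
    {σ : Type*} (F : MvPolynomial σ (Polynomial Fq)) (y : σ → Polynomial Fq)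
    (hsupp : ∀ d ∈ F.support, ∀ i, p ∣ d i) :
    MvPolynomial.eval y (tderivMv F) = Polynomial.derivative (MvPolynomial.eval y F) := by
  classical
  rw [tderivMv, map_sum, MvPolynomial.eval_eq, Polynomial.derivative_sum]
  refine Finset.sum_congr rfl fun d hd => ?_
  rw [MvPolynomial.eval_monomial, Polynomial.derivative_mul]
  have hzero : Polynomial.derivative (∏ i ∈ d.support, y i ^ d i) = 0 := by
    have h1 : (∏ i ∈ d.support, y i ^ d i)
        = (∏ i ∈ d.support, y i ^ (d i / p)) ^ p := by
      rw [← Finset.prod_pow]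
      exact Finset.prod_congr rfl fun i _ => by
        rw [← pow_mul, Nat.div_mul_cancel (hsupp d hd i)]
    rw [h1, Polynomial.derivative_pow]
    simp [CharP.cast_eq_zero (Polynomial Fq) p]
  rw [Finsupp.prod, hzero, mul_zero, add_zero]

/-- Let `F(y₀,…,y_{p−1}) = f(y₀^p + t·y₁^p + ⋯ + t^{p−1}·y_{p−1}^p)`. For any tuple
`y ∈ 𝔽_q[t]^p` and monic irreducible `P ∈ 𝔽_q[t]`, `P²` divides `F(y)` if and only if
`P` divides both `F(y)` and `(∂F/∂t)(y)`. -/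
theorem sq_dvd_iff_dvd_and_dvd_tderiv (p : ℕ) (hp : p.Prime)
    (Fq : Type*) [Field Fq] [Fintype Fq] [CharP Fq p]
    (f : Polynomial (Polynomial Fq))
    (F : MvPolynomial (Fin p) (Polynomial Fq))
    (hF : F = Polynomial.aeval
      (∑ i : Fin p, MvPolynomial.C (Polynomial.X ^ (i : ℕ)) * (MvPolynomial.X i) ^ p) f)
    (y : Fin p → Polynomial Fq) (P : Polynomial Fq) (hP : Irreducible P) (hPm : P.Monic) :
    P ^ 2 ∣ MvPolynomial.eval y F ↔
      P ∣ MvPolynomial.eval y F ∧ P ∣ MvPolynomial.eval y (tderivMv F) := by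
  classical
  have hgood : F ∈ goodSub p Fq (Fin p) := by
    have hS : (∑ i : Fin p, MvPolynomial.C (Polynomial.X ^ (i : ℕ)) * (MvPolynomial.X i) ^ p)
        ∈ goodSub p Fq (Fin p) := by
      refine Subalgebra.sum_mem _ fun i _ => ?_
      refine mul_mem ?_ ?_
      · rw [← MvPolynomial.algebraMap_eq]
        exact Subalgebra.algebraMap_mem _ _
      · intro d hd j
        rw [MvPolynomial.X_pow_eq_monomial, MvPolynomial.support_monomial] at hd
        simp only [if_neg (one_ne_zero' (Polynomial Fq)), Finset.mem_singleton] at hd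
        subst hd
        rw [Finsupp.single_apply]
        split <;> simp
    rw [hF]
    exact Algebra.adjoin_le (by simpa using hS) (Polynomial.aeval_mem_adjoin_singleton _ _)
  rw [eval_tderiv F y (fun d hd i => hgood d hd i)]
  exact sq_dvd_aux hP
end

section
/- Assume the ABC conjecture (in Granville's form: for every squarefree F ∈ ℤ[x] and α > 0, if s² | F(y) for natural numbers s, y, then s ≤ y^{1+α} for all sufficiently large y). Then for every fixed ε > 0 and λ > 0, there is a bound H₀ such that for all x and all H with x ≥ H ≥ H₀: the number of integers in [x, x+H) divisible by p² for some prime p > x^ε is at most λH. -/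
set_option maxHeartbeats 1000000

set_option synthInstance.maxHeartbeats 1000000 in
lemma sqfree_prod_lin (k : ℕ) :
    Squarefree (∏ j ∈ Finset.range k, (Polynomial.X + Polynomial.C (j : ℤ))) := by
  induction k with
  | zero => simpa using squarefree_one
  | succ k ih =>
    rw [Finset.prod_range_succ]
    have hp : Prime (Polynomial.X + Polynomial.C (k : ℤ)) := by
      simpa [sub_neg_eq_add] using Polynomial.prime_X_sub_C (-(k : ℤ))
    have hnd : ¬ (Polynomial.X + Polynomial.C (k : ℤ)) ∣
        ∏ j ∈ Finset.range k, (Polynomial.X + Polynomial.C (j : ℤ)) := by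
      intro h
      obtain ⟨j, hj, hdvd⟩ := hp.exists_mem_finset_dvd h
      have h2 := Polynomial.eval_dvd (x := (-(k : ℤ))) hdvd
      simp only [Polynomial.eval_add, Polynomial.eval_X, Polynomial.eval_C] at h2
      have : (-(k:ℤ) + j) = 0 := by simpa using h2
      have hjk : (j : ℤ) = (k : ℤ) := by linarith
      exact absurd (Nat.cast_injective hjk) (Finset.mem_range.mp hj).ne
    rw [mul_comm]
    exact squarefree_mul_iff.mpr ⟨hp.irreducible.isRelPrime_iff_not_dvd.mpr hnd, hp.squarefree, ih⟩


/-- Assuming the ABC conjecture in Granville's form (for every squarefree `F ∈ ℤ[x]`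
and `α > 0`, any `s` with `s² ∣ F(y)` satisfies `s ≤ y^{1+α}` for all sufficiently
large `y`), the number of integers in `[x, x+H)` divisible by `p²` for some prime
`p > x^ε` is at most `λH`, for all `x ≥ H ≥ H₀(ε,λ)`. -/
theorem sieve_large_primes_of_abc
    (abc : ∀ F : Polynomial ℤ, Squarefree F → ∀ α : ℝ, 0 < α →
      ∃ y₀ : ℕ, ∀ y : ℕ, y₀ ≤ y → ∀ s : ℕ, (s : ℤ) ^ 2 ∣ F.eval (y : ℤ) →
        (s : ℝ) ≤ (y : ℝ) ^ (1 + α)) :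
    ∀ ε lam : ℝ, 0 < ε → 0 < lam → ∃ H₀ : ℝ, ∀ x H : ℝ, H₀ ≤ H → H ≤ x →
      (({n : ℤ | x ≤ (n : ℝ) ∧ (n : ℝ) < x + H ∧
          ∃ p : ℕ, p.Prime ∧ x ^ ε < (p : ℝ) ∧ (p : ℤ) ^ 2 ∣ n}.ncard : ℝ))
        ≤ lam * H := by
  classical
  intro ε lam hε hlam
  set c : ℕ := ⌈4 / ε⌉₊ with hc
  have hcpos : 0 < c := Nat.ceil_pos.mpr (by positivity)
  set k : ℕ := ⌈2 * c / lam⌉₊ + 1 with hkdef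
  have hkpos : 0 < k := Nat.succ_pos _
  have hkge : (2 * c / lam : ℝ) ≤ k := by
    calc (2 * c / lam : ℝ) ≤ ⌈2 * (c:ℝ) / lam⌉₊ := Nat.le_ceil _
    _ ≤ k := by rw [hkdef]; push_cast; linarith
  obtain ⟨y₀, habc⟩ := abc (∏ j ∈ Finset.range k, (Polynomial.X + Polynomial.C (j : ℤ)))
    (sqfree_prod_lin k) 1 one_pos
  refine ⟨max (max ((y₀ : ℝ) + 1) (2 * c / lam)) (max 3 ((k : ℝ) + 1)), ?_⟩
  intro x H hH₀ hHx
  have hx3 : (3 : ℝ) ≤ x := le_trans (le_trans (le_max_left _ _) (le_max_right _ _)) (hH₀.trans hHx)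
  have hxk : (k : ℝ) + 1 ≤ x := le_trans (le_trans (le_max_right _ _) (le_max_right _ _)) (hH₀.trans hHx)
  have hxy₀ : (y₀ : ℝ) + 1 ≤ x := le_trans (le_trans (le_max_left _ _) (le_max_left _ _)) (hH₀.trans hHx)
  have hHc : (2 * c / lam : ℝ) ≤ H := le_trans (le_trans (le_max_right _ _) (le_max_left _ _)) hH₀
  have hH3 : (3 : ℝ) ≤ H := le_trans (le_trans (le_max_left _ _) (le_max_right _ _)) hH₀
  have hHpos : (0 : ℝ) < H := by linarith
  have hxpos : (0 : ℝ) < x := by linarith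
  have hx1 : (1 : ℝ) < x := by linarith
  set n₀ : ℕ := ⌈x⌉₊ with hn₀
  set M : ℕ := ⌈H / k⌉₊ with hM
  have hn₀x : x ≤ n₀ := Nat.le_ceil x
  have hn₀x' : (n₀ : ℝ) < x + 1 := Nat.ceil_lt_add_one hxpos.le
  have hk0 : (0 : ℝ) < k := by exact_mod_cast hkpos
  have hMk : H ≤ (M : ℝ) * k := by
    have h1 : H / k ≤ (M : ℝ) := Nat.le_ceil _
    calc H = (H / k) * k := by field_simp
    _ ≤ (M : ℝ) * k := by apply mul_le_mul_of_nonneg_right h1 hk0.le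
  have hMk' : (M : ℝ) * k < H + k := by
    have h1 : (M : ℝ) < H / k + 1 := Nat.ceil_lt_add_one (by positivity)
    calc (M : ℝ) * k < (H / k + 1) * k := by apply mul_lt_mul_of_pos_right h1 hk0
    _ = H + k := by field_simp
  set P : ℤ → Prop := fun n => ∃ p : ℕ, p.Prime ∧ x ^ ε < (p : ℝ) ∧ (p : ℤ) ^ 2 ∣ n with hP
  set blockBad : ℕ → Finset ℤ :=
    fun m => ((Finset.range k).image (fun j => ((n₀ + m * k + j : ℕ) : ℤ))).filter P with hbb
  set bad : Finset ℤ := (Finset.range M).biUnion blockBad with hbad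
  -- Step 1: the set is contained in bad
  have hsub : {n : ℤ | x ≤ (n : ℝ) ∧ (n : ℝ) < x + H ∧ P n} ⊆ (bad : Set ℤ) := by
    rintro n ⟨h1, h2, h3⟩
    have hn0 : 0 ≤ n := by
      have : (0:ℝ) ≤ (n:ℝ) := by linarith
      exact_mod_cast this
    set t : ℕ := n.toNat with ht
    have htn : (t : ℤ) = n := Int.toNat_of_nonneg hn0
    have htr : (t : ℝ) = (n : ℝ) := by rw [← htn]; push_cast; ring
    have h4 : n₀ ≤ t := Nat.ceil_le.mpr (by rw [htr]; exact h1)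
    have h5 : t < n₀ + M * k := by
      have : (t : ℝ) < (n₀ : ℝ) + (M : ℝ) * k := by
        rw [htr]; calc (n:ℝ) < x + H := h2
        _ ≤ (n₀ : ℝ) + (M : ℝ) * k := by linarith [hMk, hn₀x]
      exact_mod_cast this
    set d : ℕ := t - n₀ with hd
    have hdt : n₀ + d = t := Nat.add_sub_cancel' h4
    have hdlt : d < M * k := by omega
    have hm : d / k < M := Nat.div_lt_iff_lt_mul hkpos |>.mpr (by omega)
    have hj : d % k < k := Nat.mod_lt _ hkpos
    simp only [hbad, Finset.coe_biUnion, Set.mem_iUnion, Finset.mem_coe]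
    refine ⟨d / k, Finset.mem_range.mpr hm, ?_⟩
    simp only [hbb, Finset.mem_filter, Finset.mem_image, Finset.mem_range]
    refine ⟨⟨d % k, hj, ?_⟩, h3⟩
    rw [← htn]
    congr 1
    rw [Nat.add_assoc, Nat.div_add_mod' d k, hdt]
  -- Step 2: each block has at most c bad elements
  have hblock : ∀ m ∈ Finset.range M, (blockBad m).card ≤ c := by
    intro m hm
    set y : ℕ := n₀ + m * k with hy
    have hyr : (y : ℝ) = (n₀ : ℝ) + (m : ℝ) * k := by rw [hy]; push_cast; ring
    have hyx : x ≤ (y : ℝ) := by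
      have : (0:ℝ) ≤ (m:ℝ) * k := by positivity
      linarith [hn₀x]
    have hmM : (m : ℝ) + 1 ≤ M := by exact_mod_cast Finset.mem_range.mp hm
    have hy3x : (y : ℝ) ≤ 3 * x := by nlinarith [hxk, hMk', hn₀x', hHx, hx3, hk0]
    set A := (Finset.range k).filter (fun j => P ((n₀ + m * k + j : ℕ) : ℤ)) with hA
    have hch : ∀ j : ℕ, ∃ p : ℕ, j ∈ A →
        (p.Prime ∧ x ^ ε < (p : ℝ) ∧ (p : ℤ) ^ 2 ∣ ((y + j : ℕ) : ℤ)) := by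
      intro j
      by_cases hj : j ∈ A
      · obtain ⟨p, hp1, hp2, hp3⟩ := (Finset.mem_filter.mp hj).2
        exact ⟨p, fun _ => ⟨hp1, hp2, hp3⟩⟩
      · exact ⟨0, fun h => absurd h hj⟩
    choose pr hpr using hch
    set s : ℕ := ∏ j ∈ A, pr j with hs
    have hdvd : (s : ℤ) ^ 2 ∣ (∏ j ∈ Finset.range k,
        (Polynomial.X + Polynomial.C (j : ℤ))).eval (y : ℤ) := by
      have he : (∏ j ∈ Finset.range k, (Polynomial.X + Polynomial.C (j : ℤ))).eval (y : ℤ)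
          = ∏ j ∈ Finset.range k, ((y : ℤ) + j) := by
        simp [Polynomial.eval_prod]
      rw [he]
      have h1 : (s : ℤ) ^ 2 = ∏ j ∈ A, ((pr j : ℤ)) ^ 2 := by
        rw [hs]; push_cast; rw [← Finset.prod_pow]
      rw [h1]
      have h2 : ∏ j ∈ A, ((pr j : ℤ)) ^ 2 ∣ ∏ j ∈ A, ((y : ℤ) + j) := by
        apply Finset.prod_dvd_prod_of_dvd
        intro a ha
        have h := (hpr a ha).2.2
        push_cast at h ⊢
        exact h
      exact h2.trans (Finset.prod_dvd_prod_of_subset A (Finset.range k) _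
        (Finset.filter_subset _ _))
    have hyy₀ : y₀ ≤ y := by
      have : (y₀ : ℝ) ≤ (y : ℝ) := by linarith
      exact_mod_cast this
    have hupper : (s : ℝ) ≤ (y : ℝ) ^ ((1 : ℝ) + 1) := habc y hyy₀ s hdvd
    have hlower : x ^ (ε * A.card) ≤ (s : ℝ) := by
      have h1 : (s : ℝ) = ∏ j ∈ A, ((pr j : ℝ)) := by rw [hs]; push_cast; ring
      have h2 : ∏ _j ∈ A, x ^ ε ≤ ∏ j ∈ A, ((pr j : ℝ)) := by
        apply Finset.prod_le_prod
        · intro i _; positivity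
        · intro i hi; exact (hpr i hi).2.1.le
      have h3 : ∏ _j ∈ A, x ^ ε = x ^ (ε * A.card) := by
        rw [Finset.prod_const, ← Real.rpow_natCast (x ^ ε), ← Real.rpow_mul hxpos.le]
      rw [h1, ← h3]; exact h2
    have hcard : A.card ≤ c := by
      have h4 : (y : ℝ) ^ ((1:ℝ) + 1) ≤ x ^ (4 : ℝ) := by
        have e1 : (y : ℝ) ^ ((1:ℝ)+1) = (y:ℝ) ^ (2:ℕ) := by
          rw [← Real.rpow_natCast (y:ℝ) 2]; norm_num
        have e2 : x ^ (4:ℝ) = x ^ (4:ℕ) := by rw [← Real.rpow_natCast x 4]; norm_num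
        rw [e1, e2]
        have hy0 : (0:ℝ) ≤ (y:ℝ) := by positivity
        have hx9 : 9 ≤ x^2 := by nlinarith [hx3]
        have ha : (y:ℝ)^2 ≤ 9*x^2 := by nlinarith [hy3x, hy0, hxpos]
        have hb : 9*x^2 ≤ x^4 := by nlinarith [mul_le_mul_of_nonneg_left hx9 (sq_nonneg x)]
        calc (y:ℝ)^2 ≤ 9*x^2 := ha
          _ ≤ x^4 := hb
      have h5 : x ^ (ε * A.card) ≤ x ^ (4:ℝ) := le_trans hlower (le_trans hupper h4)
      have h6 : ε * A.card ≤ 4 := (Real.rpow_le_rpow_left_iff hx1).mp h5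
      have h7 : (A.card : ℝ) ≤ 4 / ε := by
        rw [le_div_iff₀ hε]; linarith
      have h8 : (A.card : ℝ) ≤ (c : ℝ) := h7.trans (Nat.le_ceil _)
      exact_mod_cast h8
    calc (blockBad m).card ≤ A.card := by
          rw [hbb]
          simp only []
          rw [Finset.filter_image]
          exact Finset.card_image_le
      _ ≤ c := hcard
  -- Step 3: combine
  have hcount : ({n : ℤ | x ≤ (n : ℝ) ∧ (n : ℝ) < x + H ∧ P n}.ncard : ℝ) ≤ (M : ℝ) * c := by
    have h1 : {n : ℤ | x ≤ (n : ℝ) ∧ (n : ℝ) < x + H ∧ P n}.ncard ≤ bad.card := by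
      rw [← Set.ncard_coe_finset]
      exact Set.ncard_le_ncard hsub bad.finite_toSet
    have h2 : bad.card ≤ M * c := by
      calc bad.card ≤ (Finset.range M).card * c :=
        Finset.card_biUnion_le_card_mul _ _ _ hblock
      _ = M * c := by rw [Finset.card_range]
    calc ({n : ℤ | x ≤ (n : ℝ) ∧ (n : ℝ) < x + H ∧ P n}.ncard : ℝ) ≤ (bad.card : ℝ) := by
          exact_mod_cast h1
      _ ≤ (M : ℝ) * c := by exact_mod_cast h2
  refine le_trans hcount ?_
  have hc0 : (0 : ℝ) < c := by exact_mod_cast hcpos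
  have hMH : (M : ℝ) ≤ H / k + 1 := (Nat.ceil_lt_add_one (by positivity)).le
  have hlc : lam * (2 * (c:ℝ) / lam) = 2 * c := by field_simp
  have hck : (c : ℝ) / k ≤ lam / 2 := by
    rw [div_le_div_iff₀ hk0 two_pos]
    have h := mul_le_mul_of_nonneg_left hkge hlam.le
    rw [hlc] at h
    linarith
  have hcH : (c : ℝ) ≤ lam / 2 * H := by
    have h := mul_le_mul_of_nonneg_left hHc hlam.le
    rw [hlc] at h
    linarith
  calc (M : ℝ) * c ≤ (H / k + 1) * c := mul_le_mul_of_nonneg_right hMH hc0.le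
    _ = (c / k) * H + c := by field_simp
    _ ≤ (lam / 2) * H + lam / 2 * H := by
        have h := mul_le_mul_of_nonneg_right hck hHpos.le
        linarith
    _ = lam * H := by ring
end
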